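/- For the Benjamini–Hochberg step-up test with critical values iα/m under arbitrary dependence of uniform-[0,1] true-null p-values, FDR ≤ min(α·Σ_{k=1}^m 1/k, 1); equivalently, the step-up test with critical values α_i = iα'/(Σ_{k=1}^m m/k) has FDR ≤ α' under arbitrary dependence. -/

import Mathlib

open MeasureTheory ProbabilityTheory Finset
open scoped Classical
noncomputable section

/-- `#{i : p i ≤ t}`, i.e. `m·F̂_m(t)`. -/
def countLE {m : ℕ} (p : Fin m → ℝ) (t : ℝ) : ℕ :=
  (Finset.univ.filter (fun i => p i ≤ t)).card

/-- The `i`-th order statistic `p_{i:m}` (for `1 ≤ i ≤ m`), characterized by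
`p_{i:m} ≤ t ↔ i ≤ #{k : p k ≤ t}`. -/
def orderStat {m : ℕ} (p : Fin m → ℝ) (i : ℕ) : ℝ :=
  sInf {t | i ≤ countLE p t}

/-- Step-up rejection number `R = max {j : p_{j:m} ≤ α_j}` (`max ∅ = 0`). -/
def suR {m : ℕ} (α : ℕ → ℝ) (p : Fin m → ℝ) : ℕ :=
  (((Finset.range (m+1)).filter (fun j => 1 ≤ j ∧ orderStat p j ≤ α j)).max).unbotD 0

/-- Step-down rejection number `R = max {j : p_{i:m} ≤ α_i for all i ≤ j}`. -/
def sdR {m : ℕ} (α : ℕ → ℝ) (p : Fin m → ℝ) : ℕ :=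
  (((Finset.range (m+1)).filter
    (fun j => ∀ i ∈ Finset.Icc 1 j, orderStat p i ≤ α i)).max).unbotD 0

/-- FDR `= E[V / max(R,1)]` for rejection number `R` and rejection rule `rej`. -/
def FDR {Ω : Type*} [MeasurableSpace Ω] (μ : Measure Ω) {m : ℕ}
    (p : Ω → Fin m → ℝ) (I0 : Finset (Fin m))
    (R : (Fin m → ℝ) → ℕ) (rej : (Fin m → ℝ) → Fin m → Prop) : ℝ :=
  ∫ ω, ((I0.filter (fun i => rej (p ω) i)).card : ℝ) / (max (R (p ω)) 1 : ℕ) ∂μ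

/-- FDR of the step-up test with critical values `α`. -/
def suFDR {Ω : Type*} [MeasurableSpace Ω] (μ : Measure Ω) {m : ℕ}
    (α : ℕ → ℝ) (p : Ω → Fin m → ℝ) (I0 : Finset (Fin m)) : ℝ :=
  FDR μ p I0 (suR α) (fun q i => q i ≤ α (suR α q))

/-- FDR of the step-down test with critical values `α`
(rejecting the hypotheses belonging to `p_{i:m}`, `i ≤ R`). -/
def sdFDR {Ω : Type*} [MeasurableSpace Ω] (μ : Measure Ω) {m : ℕ}
    (α : ℕ → ℝ) (p : Ω → Fin m → ℝ) (I0 : Finset (Fin m)) : ℝ :=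
  FDR μ p I0 (sdR α) (fun q i => 1 ≤ sdR α q ∧ q i ≤ orderStat q (sdR α q))

/-- Benjamini–Hochberg critical values `b_j = jα/m`. -/
def bh (m : ℕ) (α : ℝ) (j : ℕ) : ℝ := j * α / m

/-- The uniform distribution on `[0,1]`. -/
def unif01 : Measure ℝ := volume.restrict (Set.Icc 0 1)

/-!
Each true null `i` contributes `1{p_i ≤ α_R} / max(R, 1)` to `V / max(R, 1)`. Since the critical
values increase and `1 ≤ max(R, 1) ≤ m`, this is at most a function of `p_i` alone,
`ψ(x) = ∑_{k=1}^m (1/k - 1/(k+1)) 1{x ≤ α_k} + 1{x ≤ α_m} / (m+1)`: for `x ≤ α_r` the terms with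
`k ≥ r` telescope to `1/r`. No joint distribution enters any more, and `P(p_i ≤ α_k) ≤ α_k = kα/m`
gives `E ψ(p_i) ≤ (α/m) ∑_{k=1}^m k (1/k - 1/(k+1)) + α/(m+1) = (α/m) ∑_{k=1}^m 1/k`. Summing over
at most `m` true nulls yields `α ∑_{k=1}^m 1/k`. The bound `FDR ≤ 1` holds because a step-up test
with increasing critical values rejects at most `max(R, 1)` hypotheses.
-/

section StepUp

variable {m : ℕ}

lemma countLE_mono (p : Fin m → ℝ) : Monotone (countLE p) := fun _ _ hst =>
  card_le_card fun i hi => by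
    simp only [mem_filter] at hi ⊢
    exact ⟨hi.1, hi.2.trans hst⟩

lemma countLE_le (p : Fin m → ℝ) (t : ℝ) : countLE p t ≤ m := by
  simpa [countLE] using card_filter_le (univ : Finset (Fin m)) (fun i => p i ≤ t)

lemma isClosed_setOf_le_countLE (p : Fin m → ℝ) (j : ℕ) : IsClosed {t | j ≤ countLE p t} := by
  have h : {t | j ≤ countLE p t} =
      ⋃ s ∈ (univ.powersetCard j : Finset (Finset (Fin m))), ⋂ i ∈ s, Set.Ici (p i) := by
    ext t
    simp only [Set.mem_ofPred_eq, Set.mem_iUnion, Set.mem_iInter, Set.mem_Ici, mem_powersetCard,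
      exists_prop]
    constructor
    · intro h
      obtain ⟨s, hs, hcard⟩ := exists_subset_card_eq h
      exact ⟨s, ⟨hs.trans (filter_subset _ _), hcard⟩, fun i hi => (mem_filter.mp (hs hi)).2⟩
    · rintro ⟨s, ⟨-, rfl⟩, hs⟩
      exact card_le_card fun i hi => mem_filter.mpr ⟨mem_univ i, hs i hi⟩
  rw [h]
  exact (finite_toSet _).isClosed_biUnion fun s _ => isClosed_biInter fun i _ => isClosed_Ici

lemma orderStat_le_iff (p : Fin m → ℝ) {j : ℕ} (hj1 : 1 ≤ j) (hjm : j ≤ m) (t : ℝ) :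
    orderStat p j ≤ t ↔ j ≤ countLE p t := by
  have hu : (univ : Finset (Fin m)).Nonempty := univ_nonempty_iff.mpr ⟨⟨0, by omega⟩⟩
  have hne : {t | j ≤ countLE p t}.Nonempty := by
    refine ⟨univ.sup' hu p, ?_⟩
    rw [Set.mem_ofPred_eq, countLE, filter_true_of_mem fun i _ => le_sup' p (mem_univ i)]
    simpa using hjm
  have hbdd : BddBelow {t | j ≤ countLE p t} := by
    refine ⟨univ.inf' hu p, fun s hs => ?_⟩
    obtain ⟨i, hi⟩ : (univ.filter fun i => p i ≤ s).Nonempty :=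
      card_pos.mp (hj1.trans hs)
    exact (inf'_le p (mem_univ i)).trans (mem_filter.mp hi).2
  have hmem := (isClosed_setOf_le_countLE p j).csInf_mem hne hbdd
  exact ⟨fun h => hmem.trans (countLE_mono p h), fun h => csInf_le hbdd h⟩

lemma suR_le (α : ℕ → ℝ) (p : Fin m → ℝ) : suR α p ≤ m := by
  unfold suR
  rcases h : ((range (m + 1)).filter fun j => 1 ≤ j ∧ orderStat p j ≤ α j).max with _ | n
  · exact Nat.zero_le m
  · exact Nat.lt_succ_iff.mp (mem_range.mp (mem_filter.mp (mem_of_max h)).1)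

lemma le_suR (α : ℕ → ℝ) (p : Fin m → ℝ) {j : ℕ} (hj1 : 1 ≤ j) (hjm : j ≤ m)
    (h : orderStat p j ≤ α j) : j ≤ suR α p := by
  have hmem : j ∈ (range (m + 1)).filter fun j => 1 ≤ j ∧ orderStat p j ≤ α j :=
    mem_filter.mpr ⟨mem_range.mpr (Nat.lt_succ_of_le hjm), hj1, h⟩
  have hle := le_max hmem
  unfold suR
  rcases hmax : ((range (m + 1)).filter fun j => 1 ≤ j ∧ orderStat p j ≤ α j).max with _ | n
  · rw [hmax] at hle
    exact absurd hle (WithBot.not_coe_le_bot _)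
  · rw [hmax] at hle
    exact WithBot.coe_le_coe.mp hle

/-- If more than `max(R, 1)` p-values lay below `α_R`, then with `c` their number,
`p_{c:m} ≤ α_R ≤ α_c`, contradicting the maximality of `R`. -/
lemma countLE_suR_le {α : ℕ → ℝ} (hα : Monotone α) (q : Fin m → ℝ) :
    countLE q (α (suR α q)) ≤ max (suR α q) 1 := by
  by_contra! h
  have hc1 : 1 ≤ countLE q (α (suR α q)) := by omega
  have hcm := countLE_le q (α (suR α q))
  have hc : orderStat q (countLE q (α (suR α q))) ≤ α (countLE q (α (suR α q))) :=
    (orderStat_le_iff q hc1 hcm _).mpr (countLE_mono q (hα (by omega)))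
  have := le_suR α q hc1 hcm hc
  omega

end StepUp

lemma bh_mono (m : ℕ) {β : ℝ} (hβ : 0 ≤ β) : Monotone (bh m β) := fun _ _ hjk => by
  unfold bh
  gcongr

section Majorant

/-- The function `ψ` of the header, with critical values `t`. -/
def stepUpMajorant (t : ℕ → ℝ) (m : ℕ) (x : ℝ) : ℝ :=
  ∑ k ∈ Icc 1 m, (1 / (k : ℝ) - 1 / (k + 1)) * (Set.Iic (t k)).indicator 1 x
    + (Set.Iic (t m)).indicator 1 x / (m + 1)

lemma one_div_sub_one_div_succ_nonneg {k : ℕ} (hk : 1 ≤ k) : 0 ≤ 1 / (k : ℝ) - 1 / (k + 1) := by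
  have : (0 : ℝ) < k := by exact_mod_cast hk
  exact sub_nonneg.mpr (one_div_le_one_div_of_le this (by linarith))

lemma sum_Icc_one_div_sub_one_div_succ {r : ℕ} (m : ℕ) (hrm : r ≤ m + 1) :
    ∑ k ∈ Icc r m, (1 / (k : ℝ) - 1 / (k + 1)) = 1 / r - 1 / (m + 1) := by
  rw [← Ico_add_one_right_eq_Icc]
  have := sum_Ico_sub (fun k : ℕ => -(1 / (k : ℝ))) hrm
  simp only [neg_sub_neg, Nat.cast_add, Nat.cast_one] at this
  exact this

lemma stepUpMajorant_nonneg (t : ℕ → ℝ) (m : ℕ) (x : ℝ) : 0 ≤ stepUpMajorant t m x := by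
  unfold stepUpMajorant
  have hind : ∀ a : ℝ, 0 ≤ (Set.Iic a).indicator (1 : ℝ → ℝ) x :=
    fun a => Set.indicator_nonneg (fun _ _ => zero_le_one) x
  exact add_nonneg (sum_nonneg fun k hk =>
    mul_nonneg (one_div_sub_one_div_succ_nonneg (mem_Icc.mp hk).1) (hind _))
    (div_nonneg (hind _) (by positivity))

lemma one_div_le_stepUpMajorant {t : ℕ → ℝ} (ht : Monotone t) {m r : ℕ} (hr : 1 ≤ r)
    (hrm : r ≤ m) {x : ℝ} (hx : x ≤ t r) : 1 / (r : ℝ) ≤ stepUpMajorant t m x := by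
  have hind : ∀ k, r ≤ k → (Set.Iic (t k)).indicator (1 : ℝ → ℝ) x = 1 := fun k hk =>
    Set.indicator_of_mem (Set.mem_Iic.mpr (hx.trans (ht hk))) _
  calc 1 / (r : ℝ)
      = ∑ k ∈ Icc r m, (1 / (k : ℝ) - 1 / (k + 1)) + 1 / (m + 1) := by
        rw [sum_Icc_one_div_sub_one_div_succ m (by omega)]
        ring
    _ = ∑ k ∈ Icc r m, (1 / (k : ℝ) - 1 / (k + 1)) * (Set.Iic (t k)).indicator 1 x
          + (Set.Iic (t m)).indicator 1 x / (m + 1) := by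
        rw [hind m hrm, one_div]
        congr 1
        exact sum_congr rfl fun k hk => by rw [hind k (mem_Icc.mp hk).1, mul_one]
    _ ≤ stepUpMajorant t m x := by
        refine add_le_add_left (sum_le_sum_of_subset_of_nonneg (Icc_subset_Icc_left hr) ?_) _
        intro k hk _
        exact mul_nonneg (one_div_sub_one_div_succ_nonneg (mem_Icc.mp hk).1)
          (Set.indicator_nonneg (fun _ _ => zero_le_one) x)

lemma sum_Icc_mul_one_div_sub_add_eq (m : ℕ) :
    ∑ k ∈ Icc 1 m, (k : ℝ) * (1 / k - 1 / (k + 1)) + m / (m + 1) = ∑ k ∈ Icc 1 m, (1 : ℝ) / k := by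
  induction m with
  | zero => simp
  | succ n ih =>
    rw [sum_Icc_succ_top (by omega), sum_Icc_succ_top (by omega), ← ih]
    push_cast
    field_simp
    ring

end Majorant

section Expectation

variable {Ω : Type*} [MeasurableSpace Ω] {μ : Measure Ω}

lemma integrable_indicator_Iic_comp [IsFiniteMeasure μ] {f : Ω → ℝ} (hf : Measurable f)
    (a : ℝ) : Integrable (fun ω => (Set.Iic a).indicator (1 : ℝ → ℝ) (f ω)) μ :=
  (integrable_const (1 : ℝ)).indicator (hf measurableSet_Iic)

lemma integral_indicator_Iic_comp {f : Ω → ℝ} (hf : Measurable f) (a : ℝ) :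
    ∫ ω, (Set.Iic a).indicator (1 : ℝ → ℝ) (f ω) ∂μ = μ.real {ω | f ω ≤ a} :=
  integral_indicator_one (hf measurableSet_Iic)

lemma integrable_stepUpMajorant_comp [IsFiniteMeasure μ] {f : Ω → ℝ} (hf : Measurable f)
    (t : ℕ → ℝ) (m : ℕ) : Integrable (fun ω => stepUpMajorant t m (f ω)) μ :=
  (integrable_finsetSum _ fun k _ => (integrable_indicator_Iic_comp hf (t k)).const_mul _).add
    ((integrable_indicator_Iic_comp hf (t m)).div_const _)

lemma integral_stepUpMajorant_comp_le [IsFiniteMeasure μ] {f : Ω → ℝ} (hf : Measurable f)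
    {t : ℕ → ℝ} {m : ℕ} (hm : 1 ≤ m) {c : ℝ}
    (hdist : ∀ k ∈ Icc 1 m, μ.real {ω | f ω ≤ t k} ≤ k * c) :
    ∫ ω, stepUpMajorant t m (f ω) ∂μ ≤ c * ∑ k ∈ Icc 1 m, (1 : ℝ) / k := by
  unfold stepUpMajorant
  rw [integral_add (integrable_finsetSum _ fun k _ =>
      (integrable_indicator_Iic_comp hf (t k)).const_mul _)
      ((integrable_indicator_Iic_comp hf (t m)).div_const _),
    integral_finsetSum _ fun k _ => (integrable_indicator_Iic_comp hf (t k)).const_mul _,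
    integral_div, integral_indicator_Iic_comp hf]
  simp_rw [integral_const_mul, integral_indicator_Iic_comp hf]
  calc ∑ k ∈ Icc 1 m, (1 / (k : ℝ) - 1 / (k + 1)) * μ.real {ω | f ω ≤ t k}
        + μ.real {ω | f ω ≤ t m} / (m + 1)
      ≤ ∑ k ∈ Icc 1 m, (1 / (k : ℝ) - 1 / (k + 1)) * (k * c) + m * c / (m + 1) := by
        gcongr with k hk
        · exact one_div_sub_one_div_succ_nonneg (mem_Icc.mp hk).1
        · exact hdist k hk
        · exact hdist m (mem_Icc.mpr ⟨hm, le_rfl⟩)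
    _ = c * ∑ k ∈ Icc 1 m, (1 : ℝ) / k := by
        rw [← sum_Icc_mul_one_div_sub_add_eq, mul_add, mul_sum]
        congr 1
        · exact sum_congr rfl fun k _ => by ring
        · ring

lemma measureReal_setOf_le_le [IsProbabilityMeasure μ] {f : Ω → ℝ}
    (hf : ∀ x ∈ Set.Icc (0 : ℝ) 1, μ {ω | f ω ≤ x} ≤ ENNReal.ofReal x) {x : ℝ} (hx : 0 ≤ x) :
    μ.real {ω | f ω ≤ x} ≤ x := by
  rcases le_total x 1 with hx1 | hx1
  · exact ENNReal.toReal_le_of_le_ofReal hx (hf x ⟨hx, hx1⟩)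
  · exact measureReal_le_one.trans hx1

end Expectation

section FDR

variable {Ω : Type*} [MeasurableSpace Ω] (μ : Measure Ω) {m : ℕ}

lemma card_filter_div_le_sum_stepUpMajorant {α : ℕ → ℝ} (hα : Monotone α) (I0 : Finset (Fin m))
    (q : Fin m → ℝ) :
    ((I0.filter fun i => q i ≤ α (suR α q)).card : ℝ) / ((max (suR α q) 1 : ℕ) : ℝ)
      ≤ ∑ i ∈ I0, stepUpMajorant α m (q i) := by
  rw [card_filter, Nat.cast_sum, sum_div]
  refine sum_le_sum fun i _ => ?_
  split_ifs with hi
  · have hm : 1 ≤ m := i.pos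
    simpa using one_div_le_stepUpMajorant hα (le_max_right _ 1)
      (max_le (suR_le α q) hm) (hi.trans (hα (le_max_left _ 1)))
  · simpa using stepUpMajorant_nonneg α m (q i)

lemma suFDR_le_sum_integral [IsFiniteMeasure μ] {α : ℕ → ℝ} (hα : Monotone α)
    (I0 : Finset (Fin m)) (p : Ω → Fin m → ℝ) (hmeas : ∀ i, Measurable fun ω => p ω i) :
    suFDR μ α p I0 ≤ ∑ i ∈ I0, ∫ ω, stepUpMajorant α m (p ω i) ∂μ := by
  have hint : ∀ i ∈ I0, Integrable (fun ω => stepUpMajorant α m (p ω i)) μ :=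
    fun i _ => integrable_stepUpMajorant_comp (hmeas i) α m
  rw [← integral_finsetSum _ hint]
  refine integral_mono_of_nonneg (ae_of_all _ fun ω => by positivity)
    (integrable_finsetSum _ hint) (ae_of_all _ fun ω => ?_)
  exact card_filter_div_le_sum_stepUpMajorant hα I0 (p ω)

lemma suFDR_le_one [IsProbabilityMeasure μ] {α : ℕ → ℝ} (hα : Monotone α)
    (I0 : Finset (Fin m)) (p : Ω → Fin m → ℝ) : suFDR μ α p I0 ≤ 1 := by
  refine (integral_mono_of_nonneg (ae_of_all _ fun ω => by positivity) (integrable_const 1)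
    (ae_of_all _ fun ω => ?_)).trans_eq (by simp)
  refine div_le_one_of_le₀ ?_ (Nat.cast_nonneg _)
  exact_mod_cast (card_le_card (filter_subset_filter _ (subset_univ I0))).trans
    (countLE_suR_le hα (p ω))

lemma suFDR_bh_le [IsProbabilityMeasure μ] {β : ℝ} (hβ : 0 ≤ β) (I0 : Finset (Fin m))
    (p : Ω → Fin m → ℝ) (hmeas : ∀ i, Measurable fun ω => p ω i)
    (hstoch : ∀ i ∈ I0, ∀ x ∈ Set.Icc (0:ℝ) 1, μ {ω | p ω i ≤ x} ≤ ENNReal.ofReal x) :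
    suFDR μ (bh m β) p I0 ≤ β * ∑ k ∈ Icc 1 m, (1 : ℝ) / k := by
  calc suFDR μ (bh m β) p I0
      ≤ ∑ i ∈ I0, ∫ ω, stepUpMajorant (bh m β) m (p ω i) ∂μ :=
        suFDR_le_sum_integral μ (bh_mono m hβ) I0 p hmeas
    _ ≤ ∑ _i ∈ I0, β / m * ∑ k ∈ Icc 1 m, (1 : ℝ) / k := by
        refine sum_le_sum fun i hi => integral_stepUpMajorant_comp_le (hmeas i) i.pos
          fun k _ => ?_
        rw [← mul_div_assoc]
        exact measureReal_setOf_le_le (hstoch i hi) (by unfold bh; positivity)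
    _ ≤ m * (β / m * ∑ k ∈ Icc 1 m, (1 : ℝ) / k) := by
        rw [sum_const, nsmul_eq_mul]
        gcongr
        simpa using card_le_univ I0
    _ = β * ∑ k ∈ Icc 1 m, (1 : ℝ) / k := by
        rcases eq_or_ne m 0 with rfl | hm
        · simp
        · field_simp

end FDR

theorem by_dependent_fdr_bound_general
    {Ω : Type*} [MeasurableSpace Ω] (μ : Measure Ω) [IsProbabilityMeasure μ]
    (m : ℕ) (α α' : ℝ)
    (hα : α ∈ Set.Ioo (0:ℝ) 1) (hα' : α' ∈ Set.Ioo (0:ℝ) 1)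
    (I0 : Finset (Fin m)) (p : Ω → Fin m → ℝ)
    (hmeas : ∀ i, Measurable (fun ω => p ω i))
    -- true-null p-values are stochastically larger than uniform; no
    -- independence whatsoever is assumed
    (hstoch : ∀ i ∈ I0, ∀ x ∈ Set.Icc (0:ℝ) 1, μ {ω | p ω i ≤ x} ≤ ENNReal.ofReal x) :
    suFDR μ (bh m α) p I0 ≤ min (α * ∑ k ∈ Finset.Icc 1 m, (1 : ℝ) / k) 1 ∧
    suFDR μ (fun i => i * α' / (∑ k ∈ Finset.Icc 1 m, (m : ℝ) / k)) p I0 ≤ α' := by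
  set H := ∑ k ∈ Icc 1 m, (1 : ℝ) / k
  have hH : 0 ≤ H := sum_nonneg fun k _ => by positivity
  have hβ : 0 ≤ α' / H := div_nonneg hα'.1.le hH
  have hcrit : (fun i : ℕ => i * α' / ∑ k ∈ Icc 1 m, (m : ℝ) / k) = bh m (α' / H) := by
    have : ∑ k ∈ Icc 1 m, (m : ℝ) / k = m * H := by
      rw [mul_sum]
      exact sum_congr rfl fun k _ => by ring
    ext i
    rw [this, bh]
    ring
  refine ⟨le_min (suFDR_bh_le μ hα.1.le I0 p hmeas hstoch)
    (suFDR_le_one μ (bh_mono m hα.1.le) I0 p), ?_⟩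
  calc suFDR μ (fun i : ℕ => i * α' / ∑ k ∈ Icc 1 m, (m : ℝ) / k) p I0
      ≤ α' / H * H := hcrit ▸ suFDR_bh_le μ hβ I0 p hmeas hstoch
    _ ≤ α' := by
      rcases hH.eq_or_lt with h | h
      · simp [← h, hα'.1.le]
      · rw [div_mul_cancel₀ _ h.ne']

/-- Benjamini–Yekutieli: under arbitrary dependence of the
p-values (true nulls stochastically larger than uniform), the BH step-up test
satisfies `FDR ≤ min(α·Σ_{k=1}^m 1/k, 1)`; equivalently, the step-up test with
critical values `α_i = iα'/(Σ_{k=1}^m m/k)` has `FDR ≤ α'`. -/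
theorem by_dependent_fdr_bound
    {Ω : Type*} [MeasurableSpace Ω] (μ : Measure Ω) [IsProbabilityMeasure μ]
    (m : ℕ) (hm : 1 ≤ m) (α α' : ℝ)
    (hα : α ∈ Set.Ioo (0:ℝ) 1) (hα' : α' ∈ Set.Ioo (0:ℝ) 1)
    (I0 : Finset (Fin m)) (p : Ω → Fin m → ℝ)
    (hmeas : ∀ i, Measurable (fun ω => p ω i))
    (hrange : ∀ ω i, p ω i ∈ Set.Icc (0:ℝ) 1)
    -- true-null p-values are stochastically larger than uniform; no
    -- independence whatsoever is assumed
    (hstoch : ∀ i ∈ I0, ∀ x ∈ Set.Icc (0:ℝ) 1, μ {ω | p ω i ≤ x} ≤ ENNReal.ofReal x) :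
    suFDR μ (bh m α) p I0 ≤ min (α * ∑ k ∈ Finset.Icc 1 m, (1 : ℝ) / k) 1 ∧
    suFDR μ (fun i => i * α' / (∑ k ∈ Finset.Icc 1 m, (m : ℝ) / k)) p I0 ≤ α' :=
  by_dependent_fdr_bound_general μ m α α' hα hα' I0 p hmeas hstoch
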